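/- Let κρ, κv1, κv2 ∈ (0,1), let s ∈ ℝ^N with s ≠ 0, and let reals vmax, v, v⁺ satisfy 0 ≤ v⁺ < v ≤ vmax and v − v⁺ ≥ κρ‖s‖³. Define w = min{ max{κv1·vmax, v⁺ + κv2·(v − v⁺)}, v⁺ + κv2·(vmax − v⁺) }. Then: (i) w > v⁺; (ii) w > 0; (iii) w < vmax; and (iv) vmax − w ≥ κρ(1 − κv2)‖s‖³. -/

import Mathlib

/-! Both candidates `v⁺ + κv2 (v − v⁺)` and `v⁺ + κv2 (vmax − v⁺)` lie strictly between `v⁺`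
and `v`, resp. `vmax`, so they exceed `v⁺`, while `κv1 vmax` and the first
candidate stay below `vmax`. The second candidate caps the new radius, leaving a gap of at least
`(1 − κv2)(vmax − v⁺) ≥ (1 − κv2)(v − v⁺) ≥ (1 − κv2) κρ ‖s‖³`. -/

/-- The trust-funnel radius `vmax_{k+1}` after a successful V-iteration, formula (14). -/
noncomputable def funnelRadiusUpdate (κv1 κv2 vmax v vplus : ℝ) : ℝ :=
  min (max (κv1 * vmax) (vplus + κv2 * (v - vplus))) (vplus + κv2 * (vmax - vplus))

section funnelRadiusUpdate

variable {κv1 κv2 vmax v vplus : ℝ}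

theorem lt_funnelRadiusUpdate (hκv2 : 0 < κv2) (hv : vplus < v) (hvmax : vplus < vmax) :
    vplus < funnelRadiusUpdate κv1 κv2 vmax v vplus :=
  lt_min (lt_max_of_lt_right (lt_add_of_pos_right _ (mul_pos hκv2 (sub_pos.2 hv))))
    (lt_add_of_pos_right _ (mul_pos hκv2 (sub_pos.2 hvmax)))

theorem funnelRadiusUpdate_lt (hκv1 : κv1 < 1) (hκv2 : κv2 < 1) (hvmax_pos : 0 < vmax)
    (hv : vplus < v) (hvmax : v ≤ vmax) :
    funnelRadiusUpdate κv1 κv2 vmax v vplus < vmax := by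
  have hinterp : vplus + κv2 * (v - vplus) < v := by
    linarith [mul_lt_mul_of_pos_right hκv2 (sub_pos.2 hv)]
  exact (min_le_left _ _).trans_lt
    (max_lt (mul_lt_of_lt_one_left hvmax_pos hκv1) (hinterp.trans_le hvmax))

theorem one_sub_mul_le_sub_funnelRadiusUpdate :
    (1 - κv2) * (vmax - vplus) ≤ vmax - funnelRadiusUpdate κv1 κv2 vmax v vplus := by
  have := min_le_right (max (κv1 * vmax) (vplus + κv2 * (v - vplus)))
    (vplus + κv2 * (vmax - vplus))
  rw [funnelRadiusUpdate]
  linarith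

end funnelRadiusUpdate

theorem funnel_update_V_iteration_general (N : ℕ) (κρ κv1 κv2 : ℝ)
    (hκv1 : κv1 ∈ Set.Ioo (0 : ℝ) 1)
    (hκv2 : κv2 ∈ Set.Ioo (0 : ℝ) 1)
    (s : EuclideanSpace ℝ (Fin N))
    (vmax v vplus : ℝ) (hvplus : 0 ≤ vplus) (hvv : vplus < v) (hvmax : v ≤ vmax)
    (hdec : v - vplus ≥ κρ * ‖s‖ ^ 3) :
    let w := min (max (κv1 * vmax) (vplus + κv2 * (v - vplus)))
                 (vplus + κv2 * (vmax - vplus))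
    w > vplus ∧ 0 < w ∧ w < vmax ∧ vmax - w ≥ κρ * (1 - κv2) * ‖s‖ ^ 3 := by
  intro w
  have hvplus_lt_w : vplus < w := lt_funnelRadiusUpdate hκv2.1 hvv (hvv.trans_le hvmax)
  have hvmax_pos : 0 < vmax := hvplus.trans_lt (hvv.trans_le hvmax)
  refine ⟨hvplus_lt_w, hvplus.trans_lt hvplus_lt_w,
    funnelRadiusUpdate_lt hκv1.2 hκv2.2 hvmax_pos hvv hvmax, ?_⟩
  have hone_sub_κv2 : 0 ≤ 1 - κv2 := sub_nonneg.2 hκv2.2.le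
  calc κρ * (1 - κv2) * ‖s‖ ^ 3 = (1 - κv2) * (κρ * ‖s‖ ^ 3) := by ring
    _ ≤ (1 - κv2) * (v - vplus) := by gcongr
    _ ≤ (1 - κv2) * (vmax - vplus) := by gcongr
    _ ≤ vmax - w := one_sub_mul_le_sub_funnelRadiusUpdate

/-- properties of the successful V-iteration trust-funnel radius update. -/
theorem funnel_update_V_iteration (N : ℕ) (κρ κv1 κv2 : ℝ)
    (hκρ : κρ ∈ Set.Ioo (0 : ℝ) 1) (hκv1 : κv1 ∈ Set.Ioo (0 : ℝ) 1)
    (hκv2 : κv2 ∈ Set.Ioo (0 : ℝ) 1)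
    (s : EuclideanSpace ℝ (Fin N)) (hs : s ≠ 0)
    (vmax v vplus : ℝ) (hvplus : 0 ≤ vplus) (hvv : vplus < v) (hvmax : v ≤ vmax)
    (hdec : v - vplus ≥ κρ * ‖s‖ ^ 3) :
    let w := min (max (κv1 * vmax) (vplus + κv2 * (v - vplus)))
                 (vplus + κv2 * (vmax - vplus))
    w > vplus ∧ 0 < w ∧ w < vmax ∧ vmax - w ≥ κρ * (1 - κv2) * ‖s‖ ^ 3 :=
  funnel_update_V_iteration_general N κρ κv1 κv2 hκv1 hκv2 s vmax v vplus hvplus hvv hvmax hdec
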